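/- arXiv:1507.03726 — 6 statements merged into one kernel-verified Lean document; each statement's English description precedes it below -/
import Mathlib

section
/- For any group G, if x ∈ C(G) := ⋂_{a∈G} N_G(C_G(a)), then for every y ∈ G one has [[x,y],y] = 1 (x is a left 2-Engel element with respect to every element of G in this sense). -/
/-- The norm of centralizers: intersection of normalizers of centralizers of all elements. -/
def normCent (G : Type*) [Group G] : Subgroup G :=
  ⨅ a : G, Subgroup.normalizer (Subgroup.centralizer {a} : Set G)

theorem normCent_normal (G : Type*) [Group G] : (normCent G).Normal := by
  constructor
  intro n hn g
  simp only [normCent, Subgroup.mem_iInf] at hn ⊢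
  intro a
  rw [Subgroup.mem_normalizer_iff]
  intro h
  have h1 := Subgroup.mem_normalizer_iff.mp (hn (g⁻¹ * a * g)) (g⁻¹ * h * g)
  simp only [Subgroup.mem_centralizer_singleton_iff] at h1 ⊢
  constructor
  · intro hc
    have e0 : (g⁻¹ * h * g) * (g⁻¹ * a * g) = (g⁻¹ * a * g) * (g⁻¹ * h * g) := by
      calc (g⁻¹ * h * g) * (g⁻¹ * a * g) = g⁻¹ * (h * a) * g := by group
        _ = g⁻¹ * (a * h) * g := by rw [hc]
        _ = (g⁻¹ * a * g) * (g⁻¹ * h * g) := by group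
    have e1 := h1.mp e0
    calc g * n * g⁻¹ * h * (g * n * g⁻¹)⁻¹ * a
        = g * ((n * (g⁻¹ * h * g) * n⁻¹) * (g⁻¹*a*g)) * g⁻¹ := by group
      _ = g * ((g⁻¹*a*g) * (n * (g⁻¹ * h * g) * n⁻¹)) * g⁻¹ := by rw [e1]
      _ = a * (g * n * g⁻¹ * h * (g * n * g⁻¹)⁻¹) := by group
  · intro hc
    have e0 : (n * (g⁻¹ * h * g) * n⁻¹) * (g⁻¹*a*g) = (g⁻¹*a*g) * (n * (g⁻¹ * h * g) * n⁻¹) := by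
      calc (n * (g⁻¹ * h * g) * n⁻¹) * (g⁻¹*a*g)
          = g⁻¹ * ((g * n * g⁻¹ * h * (g * n * g⁻¹)⁻¹) * a) * g := by group
        _ = g⁻¹ * (a * (g * n * g⁻¹ * h * (g * n * g⁻¹)⁻¹)) * g := by rw [hc]
        _ = (g⁻¹*a*g) * (n * (g⁻¹ * h * g) * n⁻¹) := by group
    have e1 := h1.mpr e0
    calc h * a = g * ((g⁻¹*h*g) * (g⁻¹*a*g)) * g⁻¹ := by group
      _ = g * ((g⁻¹*a*g) * (g⁻¹*h*g)) * g⁻¹ := by rw [e1]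
      _ = a * h := by group

open scoped commutatorElement

namespace Subgroup

variable {G : Type*} [Group G] {x y : G}

theorem conj_mem_centralizer_of_mem_normalizer_centralizer
    (hx : x ∈ normalizer (centralizer {y} : Set G)) :
    x * y * x⁻¹ ∈ centralizer {y} :=
  (mem_normalizer_iff.mp hx y).mp (mem_centralizer_singleton_iff.mpr rfl)

theorem commute_commutatorElement_of_mem_normalizer_centralizer
    (hx : x ∈ normalizer (centralizer {y} : Set G)) : Commute ⁅x, y⁆ y := by
  have hconj : Commute (x * y * x⁻¹) y :=
    mem_centralizer_singleton_iff.mp (conj_mem_centralizer_of_mem_normalizer_centralizer hx)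
  rw [commutatorElement_def]
  exact hconj.mul_left (Commute.refl y).inv_left

end Subgroup

/-- Every element of `C(G)` is left 2-Engel with respect to every element of `G`. -/
theorem stmt1 (G : Type*) [Group G] (x : G) (hx : x ∈ normCent G) :
    ∀ y : G, ⁅⁅x, y⁆, y⁆ = 1 := fun y =>
  commutatorElement_eq_one_iff_commute.mpr <|
    Subgroup.commute_commutatorElement_of_mem_normalizer_centralizer (Subgroup.mem_iInf.mp hx y)
end

section
/- For any group G, the subgroup C(G) = ⋂_{a∈G} N_G(C_G(a)) is nilpotent of class at most 3. -/
/-!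
An element `a ∈ C(G)` normalizes `C_G(b)`, which contains `b`, so `a b a⁻¹` and hence `⁅a, b⁆`
commute with `b`: the group `C(G)` is 2-Engel. In a 2-Engel group `G` every element commutes with
its conjugates, so the normal closure of every element is abelian. From this, `⁅⁅x, y⁆, z⁆` is
alternating in `x, y, z`, and the Hall–Witt identity shows that its cube is trivial. Then
`d = ⁅⁅⁅x, y⁆, z⁆, w⁆ = ⁅⁅z, w⁆, ⁅x, y⁆⁆` is invariant under the even permutation
`(x, y, z, w) ↦ (z, w, x, y)`, so `d = d⁻¹`, while `d ^ 3 = ⁅⁅⁅x, y⁆, z⁆ ^ 3, w⁆ = 1`; hence `d = 1`.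
-/

open scoped commutatorElement

section

open Subgroup

theorem Subgroup.mem_normalClosure_singleton_self {G : Type*} [Group G] (g : G) :
    g ∈ normalClosure {g} :=
  subset_normalClosure (Set.mem_singleton g)

theorem Subgroup.Normal.commutatorElement_mem_left {G : Type*} [Group G] {N : Subgroup G}
    (hN : N.Normal) {n : G} (hn : n ∈ N) (g : G) : ⁅n, g⁆ ∈ N :=
  commutator_le_left N ⊤ (commutator_mem_commutator hn (mem_top g))

theorem Subgroup.Normal.commutatorElement_mem_right {G : Type*} [Group G] {N : Subgroup G}
    (hN : N.Normal) {n : G} (hn : n ∈ N) (g : G) : ⁅g, n⁆ ∈ N :=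
  commutator_le_right ⊤ N (commutator_mem_commutator (mem_top g) hn)

def IsTwoEngel (G : Type*) [Group G] : Prop :=
  ∀ a b : G, ⁅⁅a, b⁆, b⁆ = 1

theorem commute_commutatorElement_of_mem_normalizer {G : Type*} [Group G] {a b : G}
    (ha : a ∈ normalizer (centralizer {b} : Set G)) : Commute ⁅a, b⁆ b := by
  have hb : b ∈ centralizer {b} := mem_centralizer_singleton_iff.mpr rfl
  have hconj : a * b * a⁻¹ ∈ centralizer {b} := (mem_normalizer_iff.mp ha b).mp hb
  refine mem_centralizer_singleton_iff.mp ?_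
  rw [commutatorElement_def]
  exact mul_mem hconj (inv_mem hb)

theorem isTwoEngel_normCent (G : Type*) [Group G] : IsTwoEngel (normCent G) := by
  intro a b
  have ha : (a : G) ∈ normalizer (centralizer {(b : G)} : Set G) :=
    mem_iInf.mp a.2 b
  ext
  exact commutatorElement_eq_one_iff_commute.mpr (commute_commutatorElement_of_mem_normalizer ha)

namespace IsTwoEngel

variable {G : Type*} [Group G]

theorem commute_commutatorElement_right (hG : IsTwoEngel G) (a b : G) : Commute ⁅a, b⁆ b :=
  commutatorElement_eq_one_iff_commute.mp (hG a b)

theorem commute_commutatorElement_left (hG : IsTwoEngel G) (a b : G) : Commute ⁅a, b⁆ a := by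
  simpa only [commutatorElement_inv] using (hG.commute_commutatorElement_right b a).inv_left

theorem commute_self_conj (hG : IsTwoEngel G) (a g : G) : Commute a (g * a * g⁻¹) := by
  have h : g * a * g⁻¹ = ⁅g, a⁆ * a := by group
  rw [h]
  exact (hG.commute_commutatorElement_right g a).symm.mul_right (Commute.refl a)

theorem commute_conj_conj (hG : IsTwoEngel G) (a g h : G) :
    Commute (g * a * g⁻¹) (h * a * h⁻¹) := by
  simpa [mul_assoc] using (hG.commute_self_conj a (g⁻¹ * h)).map (MulAut.conj g)

theorem isMulCommutative_normalClosure (hG : IsTwoEngel G) (a : G) :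
    IsMulCommutative (normalClosure {a}) := by
  refine isMulCommutative_closure fun x hx y hy => ?_
  obtain ⟨_, rfl, hgx⟩ := Group.mem_conjugatesOfSet_iff.mp hx
  obtain ⟨_, rfl, hhy⟩ := Group.mem_conjugatesOfSet_iff.mp hy
  obtain ⟨g, rfl⟩ := isConj_iff.mp hgx
  obtain ⟨h, rfl⟩ := isConj_iff.mp hhy
  exact hG.commute_conj_conj _ g h

theorem commute_of_mem_normalClosure (hG : IsTwoEngel G) {a x y : G}
    (hx : x ∈ normalClosure {a}) (hy : y ∈ normalClosure {a}) : Commute x y :=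
  have := hG.isMulCommutative_normalClosure a
  setLike_mul_comm hx hy

theorem conj_eq_of_mem_normalClosure (hG : IsTwoEngel G) {a x : G}
    (hx : x ∈ normalClosure {a}) : a * x * a⁻¹ = x :=
  (hG.commute_of_mem_normalClosure (mem_normalClosure_singleton_self _) hx).mul_inv_cancel

theorem commutatorElement_inv_left (hG : IsTwoEngel G) (a b : G) : ⁅a⁻¹, b⁆ = ⁅a, b⁆⁻¹ := by
  rw [_root_.commutatorElement_inv_left, commutatorElement_inv]
  simpa using (hG.commute_commutatorElement_right b a).symm.inv_left.mul_inv_cancel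

theorem commutatorElement_mul_left_of_mem_normalClosure (hG : IsTwoEngel G) {u y : G}
    (hu : u ∈ normalClosure {y}) (z : G) : ⁅u, y * z⁆ = ⁅u, z⁆ := by
  rw [commutatorElement_mul_right_eq_mul_conj,
    commutatorElement_eq_one_iff_commute.mpr
      (hG.commute_of_mem_normalClosure hu (mem_normalClosure_singleton_self _)), one_mul,
    hG.conj_eq_of_mem_normalClosure (normalClosure_normal.commutatorElement_mem_left hu z)]

theorem commutatorElement_conj_mul_of_mem_normalClosure (hG : IsTwoEngel G) {w z : G}
    (hw : w ∈ normalClosure {z}) (y : G) : ⁅y * w * y⁻¹, y * z⁆ = ⁅w, y⁆ := by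
  have hzy : y * z = y * (z * y) * y⁻¹ := by group
  rw [hzy, ← conjugate_commutatorElement, hG.commutatorElement_mul_left_of_mem_normalClosure hw,
    hG.conj_eq_of_mem_normalClosure
      (normalClosure_normal.commutatorElement_mem_right (mem_normalClosure_singleton_self y) w)]

theorem commutatorElement_commutatorElement_swap_right (hG : IsTwoEngel G) (x y z : G) :
    ⁅⁅x, y⁆, z⁆ = ⁅⁅x, z⁆, y⁆⁻¹ := by
  have hxy_x : ⁅x, y⁆ ∈ normalClosure {x} :=
    normalClosure_normal.commutatorElement_mem_left (mem_normalClosure_singleton_self x) y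
  have hxy_y : ⁅x, y⁆ ∈ normalClosure {y} :=
    normalClosure_normal.commutatorElement_mem_right (mem_normalClosure_singleton_self y) x
  have hxz_z : ⁅x, z⁆ ∈ normalClosure {z} :=
    normalClosure_normal.commutatorElement_mem_right (mem_normalClosure_singleton_self z) x
  have hxzy_x : ⁅⁅x, z⁆, y⁆ ∈ normalClosure {x} := normalClosure_normal.commutatorElement_mem_left
    (normalClosure_normal.commutatorElement_mem_left (mem_normalClosure_singleton_self x) z) y
  refine eq_inv_of_mul_eq_one_right ?_
  calc ⁅⁅x, z⁆, y⁆ * ⁅⁅x, y⁆, z⁆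
      = ⁅x, y⁆ * ⁅y * ⁅x, z⁆ * y⁻¹, y * z⁆ * ⁅x, y⁆⁻¹ * ⁅⁅x, y⁆, y * z⁆ := by
        rw [hG.commutatorElement_conj_mul_of_mem_normalClosure hxz_z,
          hG.commutatorElement_mul_left_of_mem_normalClosure hxy_y,
          (hG.commute_of_mem_normalClosure hxy_x hxzy_x).mul_inv_cancel]
    _ = ⁅⁅x, y * z⁆, y * z⁆ := by
        rw [← commutatorElement_mul_left_eq_conj_mul, commutatorElement_mul_right_eq_mul_conj x]
        simp only [mul_assoc]
    _ = 1 := hG x (y * z)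

theorem commutatorElement_commutatorElement_swap_left (hG : IsTwoEngel G) (x y z : G) :
    ⁅⁅y, x⁆, z⁆ = ⁅⁅x, y⁆, z⁆⁻¹ := by
  rw [← commutatorElement_inv x y, hG.commutatorElement_inv_left]

theorem commutatorElement_commutatorElement_rotate (hG : IsTwoEngel G) (x y z : G) :
    ⁅⁅x, y⁆, z⁆ = ⁅⁅z, x⁆, y⁆ := by
  rw [hG.commutatorElement_commutatorElement_swap_right x y z,
    hG.commutatorElement_commutatorElement_swap_left z x y, inv_inv]

theorem commutatorElement_commutatorElement_pow_three (hG : IsTwoEngel G) (x y z : G) :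
    ⁅⁅x, y⁆, z⁆ ^ 3 = 1 := by
  set t := ⁅⁅x, y⁆, z⁆
  have ht_x : t ∈ normalClosure {x} := normalClosure_normal.commutatorElement_mem_left
    (normalClosure_normal.commutatorElement_mem_left (mem_normalClosure_singleton_self x) y) z
  have ht_y : t ∈ normalClosure {y} := normalClosure_normal.commutatorElement_mem_left
    (normalClosure_normal.commutatorElement_mem_right (mem_normalClosure_singleton_self y) x) z
  have ht_z : t ∈ normalClosure {z} :=
    normalClosure_normal.commutatorElement_mem_right (mem_normalClosure_singleton_self z) _
  have hall_witt := conj_commutatorElement_left_commutatorElement_mul y x z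
  simp only [hG.commutatorElement_inv_left, commutatorElement_inv] at hall_witt
  rw [hG.commutatorElement_commutatorElement_rotate y z x,
    hG.commutatorElement_commutatorElement_rotate z x y,
    hG.commutatorElement_commutatorElement_rotate y z x] at hall_witt
  calc t ^ 3 = (y * t * y⁻¹) * (z * t * z⁻¹) * (x * t * x⁻¹) := by
        rw [hG.conj_eq_of_mem_normalClosure ht_x, hG.conj_eq_of_mem_normalClosure ht_y,
          hG.conj_eq_of_mem_normalClosure ht_z, pow_three, mul_assoc]
    _ = 1 := by simpa only [mul_assoc] using hall_witt

theorem commutatorElement_pow_left (hG : IsTwoEngel G) (u w : G) (n : ℕ) :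
    ⁅u ^ n, w⁆ = ⁅u, w⁆ ^ n := by
  induction n with
  | zero => rw [pow_zero, pow_zero, commutatorElement_one_left]
  | succ n ih =>
    rw [pow_succ, commutatorElement_mul_left_eq_conj_mul,
      ((hG.commute_commutatorElement_left u w).symm.pow_left n).mul_inv_cancel, ih, pow_succ']

theorem commutatorElement_commutatorElement_commutatorElement_eq_commutatorElement
    (hG : IsTwoEngel G) (x y z w : G) : ⁅⁅⁅x, y⁆, z⁆, w⁆ = ⁅⁅z, w⁆, ⁅x, y⁆⁆ := by
  rw [hG.commutatorElement_commutatorElement_rotate ⁅x, y⁆ z w,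
    hG.commutatorElement_commutatorElement_rotate w ⁅x, y⁆ z]

theorem commutatorElement_commutatorElement_commutatorElement_swap_pairs (hG : IsTwoEngel G)
    (x y z w : G) : ⁅⁅⁅x, y⁆, z⁆, w⁆ = ⁅⁅⁅z, w⁆, x⁆, y⁆ := by
  rw [hG.commutatorElement_commutatorElement_rotate x y z,
    hG.commutatorElement_commutatorElement_swap_right ⁅z, x⁆ y w,
    hG.commutatorElement_commutatorElement_swap_right z x w, hG.commutatorElement_inv_left,
    inv_inv]

theorem commutatorElement_commutatorElement_commutatorElement_eq_one (hG : IsTwoEngel G)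
    (x y z w : G) : ⁅⁅⁅x, y⁆, z⁆, w⁆ = 1 := by
  have hd_inv : ⁅⁅⁅x, y⁆, z⁆, w⁆ = ⁅⁅⁅x, y⁆, z⁆, w⁆⁻¹ := by
    calc ⁅⁅⁅x, y⁆, z⁆, w⁆
        = ⁅⁅⁅z, w⁆, x⁆, y⁆ := hG.commutatorElement_commutatorElement_commutatorElement_swap_pairs ..
      _ = ⁅⁅x, y⁆, ⁅z, w⁆⁆ :=
        hG.commutatorElement_commutatorElement_commutatorElement_eq_commutatorElement ..
      _ = ⁅⁅z, w⁆, ⁅x, y⁆⁆⁻¹ := (commutatorElement_inv _ _).symm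
      _ = ⁅⁅⁅x, y⁆, z⁆, w⁆⁻¹ := by
        rw [hG.commutatorElement_commutatorElement_commutatorElement_eq_commutatorElement]
  have hd_cube : ⁅⁅⁅x, y⁆, z⁆, w⁆ ^ 3 = 1 := by
    rw [← hG.commutatorElement_pow_left, hG.commutatorElement_commutatorElement_pow_three,
      commutatorElement_one_left]
  rwa [pow_three, mul_eq_one_iff_eq_inv.mpr hd_inv, mul_one] at hd_cube

theorem upperCentralSeries_three_eq_top (hG : IsTwoEngel G) :
    Subgroup.upperCentralSeries G 3 = ⊤ := by
  refine eq_top_iff.mpr fun x _ => ?_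
  simp only [Subgroup.mem_upperCentralSeries_succ_iff, Subgroup.upperCentralSeries_zero,
    mem_bot]
  exact hG.commutatorElement_commutatorElement_commutatorElement_eq_one x

end IsTwoEngel

end

/-- `C(G)` is nilpotent of class at most 3. -/
theorem stmt2 (G : Type*) [Group G] :
    upperCentralSeries (↥(normCent G)) 3 = ⊤ :=
  (isTwoEngel_normCent G).upperCentralSeries_three_eq_top
end

section
/- For any group G and any i ≥ 1, every element of C_i(G) is a right 2i-Engel element of G; that is, C_i(G) ⊆ R_{2i}(G). -/
/-- The ascending series of norms of centralizers, bundled with normality. -/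
def CSeriesAux (G : Type*) [Group G] : ℕ → {H : Subgroup G // H.Normal}
  | 0 => ⟨⊥, inferInstance⟩
  | (i+1) =>
    let p := CSeriesAux G i
    haveI := p.2
    ⟨(normCent (G ⧸ p.1)).comap (QuotientGroup.mk' p.1),
      Subgroup.Normal.comap (normCent_normal _) _⟩

/-- `CSeries G i` = `C_i(G)`: `C_0 = 1` and `C_{i+1}(G)/C_i(G) = C(G/C_i(G))`. -/
def CSeries (G : Type*) [Group G] (n : ℕ) : Subgroup G := (CSeriesAux G n).1

instance CSeries_normal (G : Type*) [Group G] (n : ℕ) : (CSeries G n).Normal :=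
  (CSeriesAux G n).2

open scoped commutatorElement

/-- Iterated commutator `[x,_n y]`: `[x,_0 y] = x`, `[x,_{m+1} y] = [[x,_m y], y]`. -/
def engelComm {G : Type*} [Group G] (x y : G) : ℕ → G
  | 0 => x
  | n + 1 => ⁅engelComm x y n, y⁆

/-!
An element `z` of `C(K)` normalizes `C_K(w)`, which contains `w`, so `z w z⁻¹` commutes with `w`
and hence `[[z, w], w] = 1`. Applied in `G / C_i(G)`, this sends `[[x, y], y]` into `C_i(G)` for
`x ∈ C_{i+1}(G)`; induction on `i` then gives `[x,_{2i} y] = 1` for `x ∈ C_i(G)`.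
-/

section engelComm

variable {G H : Type*} [Group G] [Group H]

lemma engelComm_add (x y : G) (m n : ℕ) :
    engelComm x y (m + n) = engelComm (engelComm x y m) y n := by
  induction n with
  | zero => rfl
  | succ n ih => exact congrArg (⁅·, y⁆) ih

lemma map_engelComm (f : G →* H) (x y : G) (n : ℕ) :
    f (engelComm x y n) = engelComm (f x) (f y) n := by
  induction n with
  | zero => rfl
  | succ n ih => exact (map_commutatorElement f _ _).trans (congrArg (⁅·, f y⁆) ih)

end engelComm

lemma engelComm_two_eq_one_of_mem_normCent {G : Type*} [Group G] {z : G} (hz : z ∈ normCent G)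
    (w : G) : engelComm z w 2 = 1 := by
  have hw : w ∈ Subgroup.centralizer ({w} : Set G) :=
    Subgroup.mem_centralizer_singleton_iff.mpr rfl
  have hconj : z * w * z⁻¹ * w = w * (z * w * z⁻¹) :=
    Subgroup.mem_centralizer_singleton_iff.mp
      ((Subgroup.mem_normalizer_iff.mp (Subgroup.mem_iInf.mp hz w) w).mp hw)
  change ⁅⁅z, w⁆, w⁆ = 1
  rw [commutatorElement_eq_one_iff_mul_comm, commutatorElement_def]
  calc z * w * z⁻¹ * w⁻¹ * w = z * w * z⁻¹ := by group
    _ = w * (z * w * z⁻¹) * w⁻¹ := by rw [← hconj]; group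
    _ = w * (z * w * z⁻¹ * w⁻¹) := by group

lemma CSeries_zero (G : Type*) [Group G] : CSeries G 0 = ⊥ := rfl

lemma mem_CSeries_succ_iff {G : Type*} [Group G] {i : ℕ} {x : G} :
    x ∈ CSeries G (i + 1) ↔
      QuotientGroup.mk' (CSeries G i) x ∈ normCent (G ⧸ CSeries G i) :=
  Iff.rfl

lemma engelComm_two_mem_CSeries {G : Type*} [Group G] {i : ℕ} {x : G}
    (hx : x ∈ CSeries G (i + 1)) (y : G) : engelComm x y 2 ∈ CSeries G i := by
  rw [← QuotientGroup.eq_one_iff, ← QuotientGroup.mk'_apply, map_engelComm]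
  exact engelComm_two_eq_one_of_mem_normCent (mem_CSeries_succ_iff.mp hx) _

theorem stmt7_general (G : Type*) [Group G] (i : ℕ) :
    ∀ x ∈ CSeries G i, ∀ y : G, engelComm x y (2 * i) = 1 := by
  induction i with
  | zero =>
    intro x hx y
    rwa [CSeries_zero, Subgroup.mem_bot] at hx
  | succ i ih =>
    intro x hx y
    rw [mul_add, mul_one, add_comm, engelComm_add]
    exact ih _ (engelComm_two_mem_CSeries hx y) y

/-- For `i ≥ 1`, every element of `C_i(G)` is a right `2i`-Engel element of `G`. -/
theorem stmt7 (G : Type*) [Group G] (i : ℕ) (hi : 1 ≤ i) :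
    ∀ x ∈ CSeries G i, ∀ y : G, engelComm x y (2 * i) = 1 :=
  stmt7_general G i
end

section
/- A finitely generated group G is nilpotent if and only if G/C(G) is nilpotent, where C(G) = ⋂_{a∈G} N_G(C_G(a)). -/
instance (G : Type*) [Group G] : (normCent G).Normal := normCent_normal G

theorem mul_eq_neg_mul_of_mul_self_eq_zero {R : Type*} [Ring R] {a b : R} (ha : a * a = 0)
    (hb : b * b = 0) (hab : (a + b + a * b) * (a + b + a * b) = 0) : a * b = -(b * a) := by
  have expand : a * b + b * a + b * a * b + a * b * a + a * b * a * b = 0 := by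
    linear_combination (norm := noncomm_ring) hab - ha - ha * b - hb - a * hb
  have left : a * b * a + a * b * a * b = 0 := by
    linear_combination (norm := noncomm_ring) a * expand - ha * b - ha * b * a - ha * b * a * b
  have right : b * a * b + a * b * a * b = 0 := by
    linear_combination (norm := noncomm_ring) expand * b - a * hb - b * a * hb - a * b * a * hb
  -- `left` and `right` give `aba = bab`, so `abab = bab * b = 0`.
  have abab : a * b * a * b = 0 := by
    rw [add_right_cancel (left.trans right.symm), mul_assoc, hb, mul_zero]
  linear_combination (norm := noncomm_ring) expand - left - right + abab

section Monomials
variable {R : Type*} [Ring R]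

def monomialSpan (T : Set R) (j : ℕ) : Submodule ℤ R :=
  Submodule.span ℤ {f | ∃ L : List R, (∀ u ∈ L, u ∈ T) ∧ j ≤ L.length ∧ L.prod = f}

variable {T : Set R}

theorem monomialSpan_antitone : Antitone (monomialSpan T) := fun _ _ hij =>
  Submodule.span_mono fun _ ⟨L, hL, hlen, hf⟩ => ⟨L, hL, hij.trans hlen, hf⟩

theorem one_mem_monomialSpan_zero : (1 : R) ∈ monomialSpan T 0 :=
  Submodule.subset_span ⟨[], by simp, le_rfl, rfl⟩

theorem subset_monomialSpan_one : T ⊆ monomialSpan T 1 := fun u hu =>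
  Submodule.subset_span ⟨[u], by simpa using hu, le_rfl, List.prod_singleton⟩

theorem mul_mem_monomialSpan {i j : ℕ} {f g : R} (hf : f ∈ monomialSpan T i)
    (hg : g ∈ monomialSpan T j) : f * g ∈ monomialSpan T (i + j) := by
  have hfg := Submodule.mul_mem_mul hf hg
  rw [monomialSpan, monomialSpan, Submodule.span_mul_span] at hfg
  refine Submodule.span_mono ?_ hfg
  rintro _ ⟨_, ⟨L₁, hL₁, hi, rfl⟩, _, ⟨L₂, hL₂, hj, rfl⟩, rfl⟩
  refine ⟨L₁ ++ L₂, fun u hu => ?_, by simp only [List.length_append]; omega, List.prod_append⟩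
  exact (List.mem_append.mp hu).elim (hL₁ u) (hL₂ u)

variable (hsq : ∀ u ∈ T, u * u = 0) (hanti : ∀ u ∈ T, ∀ v ∈ T, u * v = -(v * u))
include hsq hanti

theorem mul_list_prod_eq_zero_of_mem {L : List R} (hL : ∀ v ∈ L, v ∈ T) {u : R} (hu : u ∈ T)
    (huL : u ∈ L) : u * L.prod = 0 := by
  induction L with
  | nil => simp at huL
  | cons v L ih =>
    rw [List.forall_mem_cons] at hL
    rw [List.prod_cons, ← mul_assoc]
    obtain rfl | huL := List.mem_cons.mp huL
    · rw [hsq u hu, zero_mul]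
    · rw [hanti u hu v hL.1, neg_mul, mul_assoc, ih hL.2 huL, mul_zero, neg_zero]

theorem list_prod_eq_zero_of_not_nodup {L : List R} (hL : ∀ v ∈ L, v ∈ T) (hnd : ¬L.Nodup) :
    L.prod = 0 := by
  induction L with
  | nil => simp at hnd
  | cons v L ih =>
    rw [List.forall_mem_cons] at hL
    rw [List.nodup_cons, not_and_or, not_not] at hnd
    rw [List.prod_cons]
    rcases hnd with hv | hnd
    · exact mul_list_prod_eq_zero_of_mem hsq hanti hL.2 hL.1 hv
    · rw [ih hL.2 hnd, mul_zero]

theorem monomialSpan_eq_bot (hT : T.Finite) {j : ℕ} (hj : T.ncard < j) :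
    monomialSpan T j = ⊥ := by
  classical
  rw [eq_bot_iff, monomialSpan, Submodule.span_le]
  rintro _ ⟨L, hL, hlen, rfl⟩
  refine (Submodule.mem_bot ℤ).mpr (list_prod_eq_zero_of_not_nodup hsq hanti hL fun hnd => ?_)
  have : L.length ≤ T.ncard := by
    rw [← List.toFinset_card_of_nodup hnd, ← Set.ncard_coe_finset]
    exact Set.ncard_le_ncard (fun u hu => hL u (List.mem_toFinset.mp hu)) hT
  omega

end Monomials

namespace MonoidHom
open Subgroup
variable {G R : Type*} [Group G] [Ring R] {ρ : G →* R}

theorem map_mul_sub_one (ρ : G →* R) (x y : G) :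
    ρ (x * y) - 1 = (ρ x - 1) + (ρ y - 1) + (ρ x - 1) * (ρ y - 1) := by
  rw [map_mul]; noncomm_ring

variable (hρ : ∀ g, (ρ g - 1) * (ρ g - 1) = 0)
include hρ

theorem map_inv_sub_one (x : G) : ρ x⁻¹ - 1 = -(ρ x - 1) := by
  have h : ρ x * (2 - ρ x) = 1 := by linear_combination (norm := noncomm_ring) -hρ x
  calc ρ x⁻¹ - 1 = ρ x⁻¹ * (ρ x * (2 - ρ x)) - 1 := by rw [h, mul_one]
    _ = -(ρ x - 1) := by rw [← mul_assoc, ← map_mul, inv_mul_cancel, map_one]; noncomm_ring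

theorem map_sub_one_mem_monomialSpan {S : Set G} (hS : closure S = ⊤) (g : G) :
    ρ g - 1 ∈ monomialSpan ((ρ · - 1) '' S) 1 := by
  induction (hS ▸ mem_top g : g ∈ closure S) using closure_induction with
  | mem s hs => exact subset_monomialSpan_one (Set.mem_image_of_mem _ hs)
  | one => simp
  | mul x y _ _ hx hy =>
    rw [map_mul_sub_one]
    exact add_mem (add_mem hx hy) (monomialSpan_antitone (by omega) (mul_mem_monomialSpan hx hy))
  | inv x _ hx => rw [map_inv_sub_one hρ]; exact neg_mem hx

theorem list_prod_map_sub_one_mem_monomialSpan {S : Set G} (hS : closure S = ⊤) (L : List G) :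
    (L.map (ρ · - 1)).prod ∈ monomialSpan ((ρ · - 1) '' S) L.length := by
  induction L with
  | nil => exact one_mem_monomialSpan_zero
  | cons g L ih =>
    rw [List.map_cons, List.prod_cons, List.length_cons, add_comm]
    exact mul_mem_monomialSpan (map_sub_one_mem_monomialSpan hρ hS g) ih

theorem list_prod_map_sub_one_eq_zero {S : Finset G} (hS : closure (S : Set G) = ⊤) {L : List G}
    (hL : S.card < L.length) : (L.map (ρ · - 1)).prod = 0 := by
  have hsq : ∀ u ∈ (ρ · - 1) '' (S : Set G), u * u = 0 := by
    rintro _ ⟨x, -, rfl⟩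
    exact hρ x
  have hanti : ∀ u ∈ (ρ · - 1) '' (S : Set G), ∀ v ∈ (ρ · - 1) '' (S : Set G),
      u * v = -(v * u) := by
    rintro _ ⟨x, -, rfl⟩ _ ⟨y, -, rfl⟩
    exact mul_eq_neg_mul_of_mul_self_eq_zero (hρ x) (hρ y) (by rw [← map_mul_sub_one]; exact hρ _)
  have hcard : ((ρ · - 1) '' (S : Set G)).ncard < L.length :=
    (Set.ncard_image_le S.finite_toSet).trans_lt (by rwa [Set.ncard_coe_finset])
  have hmem := list_prod_map_sub_one_mem_monomialSpan hρ hS L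
  rwa [monomialSpan_eq_bot hsq hanti (S.finite_toSet.image _) hcard, Submodule.mem_bot] at hmem

end MonoidHom

theorem isNilpotent_of_le_upperCentralSeries {G : Type*} [Group G] {H : Subgroup G} [H.Normal]
    {n : ℕ} (hH : H ≤ Subgroup.upperCentralSeries G n) (hQ : Group.IsNilpotent (G ⧸ H)) :
    Group.IsNilpotent G := by
  induction n generalizing G with
  | zero =>
    obtain rfl : H = ⊥ := le_bot_iff.mp hH
    exact Group.nilpotent_of_mulEquiv (QuotientGroup.quotientBot (G := G))
  | succ n ih =>
    let π := QuotientGroup.mk' (Subgroup.center G)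
    have : (H.map π).Normal := Subgroup.Normal.map ‹_› π (QuotientGroup.mk'_surjective _)
    refine Group.of_quotient_center_nilpotent (ih (H := H.map π) ?_ ?_)
    · rw [Subgroup.map_le_iff_le_comap, Subgroup.comap_upperCentralSeries_quotient_center]
      exact hH
    · exact Group.nilpotent_of_surjective _ (QuotientGroup.map_surjective_of_surjective _ _ π
        (QuotientGroup.mk_surjective.comp (QuotientGroup.mk'_surjective _))
        (Subgroup.le_comap_map π H))

section ConjRep
open scoped IsMulCommutative commutatorElement
variable {G : Type*} [Group G] (A : Subgroup G) [A.Normal] [IsMulCommutative A]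

def conjRep : G →* Module.End ℤ (Additive A) :=
  (Representation.ofMulDistribMulAction (ConjAct G) A).comp ConjAct.toConjAct.toMonoidHom

theorem coe_conjRep_sub_one_apply (g : G) (a : Additive A) :
    (((conjRep A g - 1) a).toMul : G) = ⁅g, (a.toMul : G)⁆ := by
  simp [conjRep, commutatorElement_def, ConjAct.Subgroup.val_conj_smul, ConjAct.toConjAct_smul,
    div_eq_mul_inv]

theorem conjRep_sub_one_mul_self (hA : ∀ g, ∀ a ∈ A, Commute g ⁅g, a⁆) (g : G) :
    (conjRep A g - 1) * (conjRep A g - 1) = 0 := by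
  refine LinearMap.ext fun a => Additive.toMul.injective ?_
  apply Subtype.ext
  rw [Module.End.mul_apply, coe_conjRep_sub_one_apply, coe_conjRep_sub_one_apply,
    commutatorElement_eq_one_iff_commute.mpr (hA g _ (Additive.toMul a).2)]
  rfl

theorem mem_upperCentralSeries_of_forall_list_prod_apply_eq_zero {j : ℕ} {a : Additive A}
    (h : ∀ L : List G, L.length = j → (L.map (conjRep A · - 1)).prod a = 0) :
    (a.toMul : G) ∈ Subgroup.upperCentralSeries G j := by
  induction j generalizing a with
  | zero =>
    have ha : a = 0 := by simpa using h [] rfl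
    simp [ha]
  | succ j ih =>
    refine Subgroup.mem_upperCentralSeries_succ_iff.mpr fun g => ?_
    rw [← commutatorElement_inv, ← coe_conjRep_sub_one_apply]
    refine inv_mem (ih fun L hL => ?_)
    simpa [hL] using h (L ++ [g])

end ConjRep

section NormCent
open scoped commutatorElement
variable {G : Type*} [Group G] {c : G}

theorem commute_conj_of_mem_normCent (hc : c ∈ normCent G) (g : G) : Commute (c * g * c⁻¹) g :=
  Subgroup.mem_centralizer_singleton_iff.mp <|
    (Subgroup.mem_normalizer_iff.mp (Subgroup.mem_iInf.mp hc g) g).mp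
      (Subgroup.mem_centralizer_singleton_iff.mpr rfl)

theorem commutatorElement_commute_of_mem_normCent (hc : c ∈ normCent G) (g : G) :
    Commute ⁅c, g⁆ g :=
  (commute_conj_of_mem_normCent hc g).mul_left (Commute.refl g).inv_left

theorem commute_commutatorElement_of_mem_normCent (hc : c ∈ normCent G) (g : G) :
    Commute g ⁅g, c⁆ := by
  rw [← commutatorElement_inv]
  exact (commutatorElement_commute_of_mem_normCent hc g).inv_left.symm

theorem commute_self_conj_of_mem_normCent (hc : c ∈ normCent G) (w : G) :
    Commute c (w⁻¹ * c * w) := by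
  have hw := commutatorElement_commute_of_mem_normCent (inv_mem hc) w⁻¹
  have hcw := commutatorElement_commute_of_mem_normCent (inv_mem hc) (c * w)⁻¹
  rw [show ⁅c⁻¹, (c * w)⁻¹⁆ = ⁅c⁻¹, w⁻¹⁆ by simp only [commutatorElement_def]; group] at hcw
  have hc' : Commute ⁅c⁻¹, w⁻¹⁆ c := by simpa using hcw.inv_right.mul_right hw
  rw [show w⁻¹ * c * w = c * ⁅c⁻¹, w⁻¹⁆ by simp only [commutatorElement_def]; group]
  exact (Commute.refl c).mul_right hc'.symm

theorem isMulCommutative_normalClosure_singleton (hc : c ∈ normCent G) :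
    IsMulCommutative (Subgroup.normalClosure {c}) := by
  refine Subgroup.isMulCommutative_closure fun x hx y hy => ?_
  simp only [Group.mem_conjugatesOfSet_iff, Set.mem_singleton_iff, exists_eq_left,
    isConj_iff] at hx hy
  obtain ⟨g, rfl⟩ := hx
  obtain ⟨h, rfl⟩ := hy
  have := commute_self_conj_of_mem_normCent ((normCent_normal G).conj_mem c hc h) (h * g⁻¹)
  simpa [mul_assoc] using this.symm.eq

end NormCent

open scoped IsMulCommutative in
theorem normCent_le_upperCentralSeries {G : Type*} [Group G] {S : Finset G}
    (hS : Subgroup.closure (S : Set G) = ⊤) :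
    normCent G ≤ Subgroup.upperCentralSeries G (S.card + 1) := by
  intro c hc
  have hA : Subgroup.normalClosure {c} ≤ normCent G :=
    Subgroup.normalClosure_le_normal (Set.singleton_subset_iff.mpr hc)
  have := isMulCommutative_normalClosure_singleton hc
  have hρ := conjRep_sub_one_mul_self _ fun g _ ha =>
    commute_commutatorElement_of_mem_normCent (hA ha) g
  refine mem_upperCentralSeries_of_forall_list_prod_apply_eq_zero (Subgroup.normalClosure {c})
    (a := Additive.ofMul ⟨c, Subgroup.subset_normalClosure (Set.mem_singleton c)⟩) fun L hL => ?_
  rw [MonoidHom.list_prod_map_sub_one_eq_zero hρ hS (by omega), LinearMap.zero_apply]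

/-- A finitely generated group `G` is nilpotent iff `G/C(G)` is nilpotent. -/
theorem stmt9 (G : Type*) [Group G] (hFG : Group.FG G) :
    Group.IsNilpotent G ↔ Group.IsNilpotent (G ⧸ normCent G) := by
  refine ⟨fun _ => inferInstance, fun hQ => ?_⟩
  obtain ⟨S, hS⟩ := Group.fg_def.mp hFG
  exact isNilpotent_of_le_upperCentralSeries (normCent_le_upperCentralSeries hS) hQ
end

section
/- If G is a group such that G/C(G) is nilpotent, then every cyclic subgroup of G is subnormal in G (i.e., G is a Baer group). -/
/-- A subgroup is subnormal if it is connected to the whole group by a finite chain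
of successive normal inclusions. -/
def IsSubnormal {G : Type*} [Group G] (H : Subgroup G) : Prop :=
  ∃ (n : ℕ) (c : ℕ → Subgroup G), c 0 = H ∧ c n = ⊤ ∧
    ∀ i < n, c i ≤ c (i + 1) ∧ ∀ g ∈ c (i + 1), ∀ h ∈ c i, g * h * g⁻¹ ∈ c i

namespace Subgroup

variable {G : Type*} [Group G]

theorem isSubnormal_of_isNilpotent [Group.IsNilpotent G] (H : Subgroup G) : H.IsSubnormal := by
  revert H
  refine Group.nilpotent_center_quotient_ind (P := fun G _ _ => ∀ H : Subgroup G, H.IsSubnormal) G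
    (fun _ _ _ _ => IsSubnormal.of_subsingleton) fun G _ _ ih H => ?_
  have hle : H ≤ H ⊔ center G := le_sup_left
  refine IsSubnormal.step H _ hle ?_ ?_
  · simpa [comap_map_eq] using (ih (H.map (QuotientGroup.mk' (center G)))).comap
      (QuotientGroup.mk' (center G))
  · exact (normal_subgroupOf_iff_le_normalizer hle).mpr
      (sup_le le_normalizer (center_le_normalizer _))

theorem IsSubnormal.of_le_of_isNilpotent_quotient {N K : Subgroup G} [N.Normal]
    [Group.IsNilpotent (G ⧸ N)] (hNK : N ≤ K) : K.IsSubnormal := by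
  simpa [comap_map_eq_self, hNK] using
    (isSubnormal_of_isNilpotent (K.map (QuotientGroup.mk' N))).comap (QuotientGroup.mk' N)

theorem IsSubnormal.zpowers_of_normalizer_centralizer {x : G}
    (h : (normalizer (centralizer {x} : Set G)).IsSubnormal) : (zpowers x).IsSubnormal := by
  have hle : zpowers x ≤ centralizer {x} :=
    zpowers_le.mpr (mem_centralizer_singleton_iff.mpr rfl)
  refine IsSubnormal.step _ _ hle (IsSubnormal.step _ _ le_normalizer h inferInstance) ?_
  rw [normal_subgroupOf_iff_le_normalizer hle, zpowers_eq_closure, ← centralizer_closure]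
  exact centralizer_le_normalizer _

end Subgroup

theorem IsSubnormal.of_subgroup_isSubnormal {G : Type*} [Group G] {H : Subgroup G}
    (hH : H.IsSubnormal) : IsSubnormal H := by
  obtain ⟨n, f, hmono, hnormal, h0, hn⟩ := hH.exists_chain
  refine ⟨n, f, h0, hn, fun i _ => ⟨hmono i.le_succ, fun g hg h hh => ?_⟩⟩
  exact (Subgroup.normal_subgroupOf_iff (hmono i.le_succ)).mp (hnormal i) h g hh hg

/-- If `G/C(G)` is nilpotent then every cyclic subgroup of `G` is subnormal. -/
theorem stmt10 (G : Type*) [Group G] (h : Group.IsNilpotent (G ⧸ normCent G)) :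
    ∀ x : G, IsSubnormal (Subgroup.zpowers x) := by
  intro x
  have hN : (Subgroup.normalizer (Subgroup.centralizer {x} : Set G)).IsSubnormal :=
    .of_le_of_isNilpotent_quotient (N := normCent G) (iInf_le _ x)
  exact .of_subgroup_isSubnormal hN.zpowers_of_normalizer_centralizer
end

section
/- Let G be a finitely generated group and H a subgroup of G. For any i ≥ 0, H is nilpotent if and only if HC_i(G)/C_i(G) (equivalently, H/(H ∩ C_i(G))) is nilpotent, assuming H is finitely generated. -/
instance (G : Type*) [Group G] (i : ℕ) (H : Subgroup G) :
    ((CSeries G i).subgroupOf H).Normal :=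
  Subgroup.Normal.comap (CSeries_normal G i) _

open Subgroup ConjAct
open scoped commutatorElement

def IsRightTwoEngel {G : Type*} [Group G] (x : G) : Prop := ∀ g : G, ⁅⁅x, g⁆, g⁆ = 1

section TwoEngel

variable {G : Type*} [Group G]

theorem isRightTwoEngel_of_mem_normCent {x : G} (hx : x ∈ normCent G) : IsRightTwoEngel x := by
  intro g
  have hconj : x * g * x⁻¹ ∈ centralizer {g} :=
    (mem_normalizer_iff.mp (mem_iInf.mp hx g) g).mp (mem_centralizer_singleton_iff.mpr rfl)
  rw [commutatorElement_eq_one_iff_commute, commutatorElement_def]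
  exact Commute.mul_left (mem_centralizer_singleton_iff.mp hconj) (Commute.inv_left (.refl g))

theorem IsRightTwoEngel.commute_conj {b : G} (hb : IsRightTwoEngel b) (g : G) :
    Commute b (g * b * g⁻¹) := by
  have hcomm : ⁅⁅b, g⁆, b⁆ = 1 := by
    have h := hb (g * b)
    have e : ⁅⁅b, g * b⁆, g * b⁆ = ⁅⁅b, g⁆, g⁆ * (g * ⁅⁅b, g⁆, b⁆ * g⁻¹) := by group
    rwa [e, hb g, one_mul, conj_eq_one_iff] at h
  rw [show g * b * g⁻¹ = ⁅b, g⁆⁻¹ * b by group]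
  exact ((commutatorElement_eq_one_iff_commute.mp hcomm).symm.inv_right).mul_right (.refl b)

theorem IsRightTwoEngel.isMulCommutative_normalClosure {b : G} (hb : IsRightTwoEngel b) :
    IsMulCommutative (normalClosure ({b} : Set G)) := by
  refine isMulCommutative_closure ?_
  simp only [Group.mem_conjugatesOfSet_iff, Set.mem_singleton_iff, exists_eq_left, isConj_iff]
  rintro _ ⟨g, rfl⟩ _ ⟨h, rfl⟩
  have := congrArg (fun z => g * z * g⁻¹) (hb.commute_conj (g⁻¹ * h)).eq
  simpa only [mul_assoc, mul_inv_rev, inv_inv, mul_inv_cancel_left, mul_inv_cancel, mul_one]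
    using this

end TwoEngel

theorem mul_mul_eq_zero_of_mul_self_eq_zero {R : Type*} [Ring R] {a b : R} (ha : a * a = 0)
    (hb : b * b = 0) (hab : (a + b - a * b) * (a + b - a * b) = 0) : a * b * a = 0 := by
  have hac : a * (a + b - a * b) = a * b := by
    rw [mul_sub, mul_add, ← mul_assoc, ha, zero_mul, zero_add, sub_zero]
  have h : a * b * a = a * b * a * b := by
    have := congrArg (a * ·) hab
    simp only [← mul_assoc, hac, mul_zero] at this
    rw [mul_sub, mul_add, mul_assoc a b b, hb, mul_zero, add_zero, sub_eq_zero] at this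
    rwa [mul_assoc (a * b) a b]
  calc a * b * a = a * b * a * b * b := by rw [← h, ← h]
    _ = 0 := by rw [mul_assoc _ b b, hb, mul_zero]

theorem MonoidHom.one_sub_mul_mul_one_sub_eq_zero {M R : Type*} [Monoid M] [Ring R] (ρ : M →* R)
    (hρ : ∀ g, (1 - ρ g) * (1 - ρ g) = 0) (g h : M) : (1 - ρ g) * ρ h * (1 - ρ g) = 0 := by
  have hgh : (1 - ρ g) + (1 - ρ h) - (1 - ρ g) * (1 - ρ h) = 1 - ρ (g * h) := by
    rw [map_mul]; noncomm_ring
  have hghg := mul_mul_eq_zero_of_mul_self_eq_zero (hρ g) (hρ h) (hgh ▸ hρ (g * h))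
  calc (1 - ρ g) * ρ h * (1 - ρ g)
      = (1 - ρ g) * (1 - ρ g) - (1 - ρ g) * (1 - ρ h) * (1 - ρ g) := by noncomm_ring
    _ = 0 := by rw [hρ g, hghg, sub_zero]

open scoped IsMulCommutative in
theorem commute_conj_commutator_of_isRightTwoEngel {K : Type*} [Group K] {A : Subgroup K}
    [A.Normal] [IsMulCommutative A] (hA : ∀ x ∈ A, IsRightTwoEngel x) {a : K} (ha : a ∈ A)
    (s h : K) : Commute (h * ⁅a, s⁆ * h⁻¹) s := by
  let ρ := Representation.ofMulDistribMulAction (ConjAct K) A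
  have hρ : ∀ (g : ConjAct K) (x : Additive A),
      ((ρ g x).toMul : K) = ofConjAct g * x.toMul * (ofConjAct g)⁻¹ := fun _ _ => rfl
  have hT : ∀ (g : ConjAct K) (x : Additive A),
      (((1 - ρ g) x).toMul : K) = ⁅(x.toMul : K), ofConjAct g⁆ := by
    intro g x
    rw [LinearMap.sub_apply, toMul_sub, coe_div, hρ, Module.End.one_apply, commutatorElement_def,
      div_eq_mul_inv]
    simp only [mul_inv_rev, inv_inv, mul_assoc]
  have hsq : ∀ g, (1 - ρ g) * (1 - ρ g) = 0 := by
    intro g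
    ext x
    rw [Module.End.mul_apply, hT, hT]
    exact hA _ (Additive.toMul x).2 _
  have key := congrArg (fun y => (y.toMul : K)) <| LinearMap.congr_fun
    (ρ.one_sub_mul_mul_one_sub_eq_zero hsq (toConjAct s) (toConjAct h)) (Additive.ofMul ⟨a, ha⟩)
  simp only [Module.End.mul_apply, hT, hρ] at key
  rw [← commutatorElement_eq_one_iff_commute]
  simpa using key

theorem List.exists_eq_append_cons_append_cons_of_not_nodup {α : Type*} {l : List α}
    (hl : ¬ l.Nodup) : ∃ s p q r, l = p ++ s :: (q ++ s :: r) := by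
  obtain ⟨s, hs⟩ : ∃ s, List.Sublist [s, s] l := by simpa [List.nodup_iff_sublist] using hl
  obtain ⟨r₁, r₂, rfl, h₁, h₂⟩ := List.cons_sublist_iff.mp hs
  obtain ⟨p, q₁, rfl⟩ := List.append_of_mem h₁
  obtain ⟨q₂, r, rfl⟩ := List.append_of_mem (List.singleton_sublist.mp h₂)
  exact ⟨s, p, q₁ ++ q₂, r, by simp⟩

def leftNormedCommutator {G : Type*} [Group G] (x : G) (l : List G) : G :=
  l.foldl (fun y g => ⁅y, g⁆) x

section LeftNormedCommutator

variable {G : Type*} [Group G]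

@[simp]
theorem leftNormedCommutator_cons (x g : G) (l : List G) :
    leftNormedCommutator x (g :: l) = leftNormedCommutator ⁅x, g⁆ l := rfl

theorem leftNormedCommutator_append (x : G) (l₁ l₂ : List G) :
    leftNormedCommutator x (l₁ ++ l₂) = leftNormedCommutator (leftNormedCommutator x l₁) l₂ :=
  List.foldl_append

@[simp]
theorem leftNormedCommutator_one (l : List G) : leftNormedCommutator 1 l = 1 := by
  induction l with
  | nil => rfl
  | cons g l ih => simpa using ih

theorem map_leftNormedCommutator {G' : Type*} [Group G'] (f : G →* G') (x : G) (l : List G) :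
    f (leftNormedCommutator x l) = leftNormedCommutator (f x) (l.map f) := by
  induction l generalizing x with
  | nil => rfl
  | cons g l ih => simp [ih, map_commutatorElement]

theorem leftNormedCommutator_mem {N : Subgroup G} [N.Normal] {x : G} (hx : x ∈ N)
    (l : List G) : leftNormedCommutator x l ∈ N := by
  induction l generalizing x with
  | nil => exact hx
  | cons g l ih => exact ih (commutator_le_left N ⊤ (commutator_mem_commutator hx (mem_top g)))

theorem leftNormedCommutator_eq_one_of_not_nodup {N : Subgroup G} [N.Normal]
    (hN : ∀ x ∈ N, IsRightTwoEngel x) {b : G} (hb : b ∈ N) {l : List G} (hl : ¬ l.Nodup) :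
    leftNormedCommutator b l = 1 := by
  obtain ⟨s, p, q, r, rfl⟩ := List.exists_eq_append_cons_append_cons_of_not_nodup hl
  have hAN : normalClosure {b} ≤ N := normalClosure_le_normal (Set.singleton_subset_iff.mpr hb)
  have : IsMulCommutative (normalClosure {b}) := (hN b hb).isMulCommutative_normalClosure
  have hp : leftNormedCommutator b p ∈ normalClosure {b} :=
    leftNormedCommutator_mem (subset_normalClosure (Set.mem_singleton b)) p
  -- `A ⊓ core (C(s))` is normal, so it keeps every `[b, p, s, q]`, which thus commutes with `s`
  have hC : ⁅leftNormedCommutator b p, s⁆ ∈ normalClosure {b} ⊓ (centralizer {s}).normalCore := by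
    refine mem_inf.mpr ⟨leftNormedCommutator_mem hp [s], fun h => ?_⟩
    exact mem_centralizer_singleton_iff.mpr
      (commute_conj_commutator_of_isRightTwoEngel (fun x hx => hN x (hAN hx)) hp s h).eq
  have hq := normalCore_le _ (mem_inf.mp (leftNormedCommutator_mem hC q)).2
  rw [mem_centralizer_singleton_iff] at hq
  rw [leftNormedCommutator_append, leftNormedCommutator_cons, leftNormedCommutator_append,
    leftNormedCommutator_cons, commutatorElement_eq_one_iff_mul_comm.mpr hq,
    leftNormedCommutator_one]

theorem mem_upperCentralSeries_succ_of_closure_eq_top {S : Set G} (hS : closure S = ⊤) {n : ℕ}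
    {x : G} (h : ∀ s ∈ S, ⁅x, s⁆ ∈ Subgroup.upperCentralSeries G n) :
    x ∈ Subgroup.upperCentralSeries G (n + 1) := by
  rw [Subgroup.mem_upperCentralSeries_succ_iff]
  intro y
  induction (hS ▸ mem_top y : y ∈ closure S) using closure_induction with
  | mem s hs => exact h s hs
  | one => simp
  | mul y z _ _ hy hz =>
    rw [show ⁅x, y * z⁆ = ⁅x, y⁆ * (y * ⁅x, z⁆ * y⁻¹) by group]
    exact mul_mem hy (Normal.conj_mem inferInstance _ hz y)
  | inv y _ hy =>
    rw [show ⁅x, y⁻¹⁆ = y⁻¹ * ⁅x, y⁆⁻¹ * y⁻¹⁻¹ by group]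
    exact Normal.conj_mem inferInstance _ (inv_mem hy) y⁻¹

theorem mem_upperCentralSeries_add_of_leftNormedCommutator_mem {S : Set G} (hS : closure S = ⊤)
    {j n : ℕ} {x : G} (h : ∀ l : List G, (∀ g ∈ l, g ∈ S) → l.length = n →
      leftNormedCommutator x l ∈ Subgroup.upperCentralSeries G j) :
    x ∈ Subgroup.upperCentralSeries G (j + n) := by
  induction n generalizing x with
  | zero => exact h [] (by simp) rfl
  | succ n ih =>
    refine mem_upperCentralSeries_succ_of_closure_eq_top hS fun s hs => ih fun l hlS hlen => ?_
    exact h (s :: l) (by simpa [hs] using hlS) (by simp [hlen])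

end LeftNormedCommutator

section Nilpotent

variable {G : Type*} [Group G]

theorem lowerCentralSeries_add_eq_bot_of_le_upperCentralSeries {m n : ℕ}
    (h : (⊤ : Subgroup G).lowerCentralSeries m ≤ Subgroup.upperCentralSeries G n) :
    (⊤ : Subgroup G).lowerCentralSeries (m + n) = ⊥ := by
  induction n generalizing m with
  | zero => exact le_bot_iff.mp h
  | succ n ih =>
    rw [show m + (n + 1) = (m + 1) + n by omega]
    refine ih ((commutator_mono h le_rfl).trans ?_)
    exact commutator_upperCentralSeries_top_le G n

theorem isNilpotent_of_ker_le_upperCentralSeries {H : Type*} [Group H] (f : G →* H) {n : ℕ}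
    (hf : f.ker ≤ Subgroup.upperCentralSeries G n) [Group.IsNilpotent H] : Group.IsNilpotent G := by
  rw [Subgroup.nilpotent_iff_lowerCentralSeries]
  obtain ⟨m, hm⟩ := Subgroup.nilpotent_iff_lowerCentralSeries.mp ‹_›
  refine ⟨m + n, lowerCentralSeries_add_eq_bot_of_le_upperCentralSeries
    (le_trans ((Subgroup.map_eq_bot_iff _).mp ?_) hf)⟩
  rw [map_lowerCentralSeries, ← le_bot_iff]
  exact hm ▸ lowerCentralSeries_mono m le_top

end Nilpotent

theorem CSeries_succ (G : Type*) [Group G] (i : ℕ) :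
    CSeries G (i + 1) = (normCent (G ⧸ CSeries G i)).comap (QuotientGroup.mk' (CSeries G i)) :=
  rfl

theorem leftNormedCommutator_mem_CSeries_of_not_nodup {G : Type*} [Group G] {i : ℕ} {x : G}
    (hx : x ∈ CSeries G (i + 1)) {l : List G} (hl : ¬ l.Nodup) :
    leftNormedCommutator x l ∈ CSeries G i := by
  have := normCent_normal (G ⧸ CSeries G i)
  rw [← QuotientGroup.ker_mk' (CSeries G i), MonoidHom.mem_ker, map_leftNormedCommutator]
  exact leftNormedCommutator_eq_one_of_not_nodup (fun y hy => isRightTwoEngel_of_mem_normCent hy)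
    (by rwa [CSeries_succ] at hx) (fun h => hl h.of_map)

theorem CSeries_subgroupOf_le_upperCentralSeries {G : Type*} [Group G] (H : Subgroup G)
    (S : Finset H) (hS : closure (S : Set H) = ⊤) (i : ℕ) :
    (CSeries G i).subgroupOf H ≤ Subgroup.upperCentralSeries H (i * (S.card + 1)) := by
  induction i with
  | zero => simp [CSeries, CSeriesAux]
  | succ i ih =>
    intro x hx
    rw [show (i + 1) * (S.card + 1) = i * (S.card + 1) + (S.card + 1) by ring]
    refine mem_upperCentralSeries_add_of_leftNormedCommutator_mem hS fun l hlS hlen => ih ?_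
    rw [mem_subgroupOf, ← H.coe_subtype, map_leftNormedCommutator]
    refine leftNormedCommutator_mem_CSeries_of_not_nodup hx fun hnd => ?_
    classical
    have := Finset.card_le_card (s := l.toFinset) fun g hg => hlS g (List.mem_toFinset.mp hg)
    rw [List.toFinset_card_of_nodup hnd.of_map] at this
    omega

theorem stmt11_general (G : Type*) [Group G] (H : Subgroup G)
    (hH : Group.FG H) (i : ℕ) :
    Group.IsNilpotent H ↔ Group.IsNilpotent (H ⧸ (CSeries G i).subgroupOf H) := by
  refine ⟨fun _ => Group.nilpotent_quotient_of_nilpotent ((CSeries G i).subgroupOf H), fun _ => ?_⟩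
  obtain ⟨S, hS⟩ := Group.fg_def.mp hH
  exact isNilpotent_of_ker_le_upperCentralSeries (QuotientGroup.mk' ((CSeries G i).subgroupOf H))
    ((QuotientGroup.ker_mk' _).trans_le (CSeries_subgroupOf_le_upperCentralSeries H S hS i))

/-- For `H ≤ G` finitely generated, `H` is nilpotent iff `H/(H ∩ C_i(G))` is nilpotent. -/
theorem stmt11 (G : Type*) [Group G] (hG : Group.FG G) (H : Subgroup G)
    (hH : Group.FG H) (i : ℕ) :
    Group.IsNilpotent H ↔ Group.IsNilpotent (H ⧸ (CSeries G i).subgroupOf H) :=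
  stmt11_general G H hH i
end
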